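/- arXiv:1503.01154 — 4 statements merged into one kernel-verified Lean document; each statement's English description precedes it below -/
import Mathlib

section
/- Let τ₀ > 0 and ν > 0 be real numbers, and let Θ, Ω ∈ ℝ. If, in ℂ, (iΩ)³ − 2(iΘ)·τ₀^{3/2}·(iΩ)² − 2(iΘ)·τ₀²·ν⁻¹·(iΩ) + 2(iΘ)²·τ₀^{7/2}·ν⁻¹ + 4(iΘ)·τ₀⁴·ν⁻¹ = 0, then Θ = 0 and Ω = 0. -/
/-- The characteristic polynomial of the limiting matrix `A₀(λ)` has no nonzero
purely imaginary root `γ = iΩ` for purely imaginary spectral parameter `λ = iΘ`. -/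
theorem stmt_3 (τ₀ ν : ℝ) (hτ₀ : 0 < τ₀) (hν : 0 < ν) (Θ Ω : ℝ)
    (h : (Complex.I * (Ω : ℂ)) ^ 3
        - 2 * (Complex.I * (Θ : ℂ)) * ((τ₀ ^ ((3:ℝ)/2) : ℝ) : ℂ) * (Complex.I * (Ω : ℂ)) ^ 2
        - 2 * (Complex.I * (Θ : ℂ)) * ((τ₀ ^ 2 : ℝ) : ℂ) * ((ν⁻¹ : ℝ) : ℂ) * (Complex.I * (Ω : ℂ))
        + 2 * (Complex.I * (Θ : ℂ)) ^ 2 * ((τ₀ ^ ((7:ℝ)/2) : ℝ) : ℂ) * ((ν⁻¹ : ℝ) : ℂ)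
        + 4 * (Complex.I * (Θ : ℂ)) * ((τ₀ ^ 4 : ℝ) : ℂ) * ((ν⁻¹ : ℝ) : ℂ) = 0) :
    Θ = 0 ∧ Ω = 0 := by
  set a : ℝ := τ₀ ^ ((3:ℝ)/2) with ha_def
  have ha : 0 < a := Real.rpow_pos_of_pos hτ₀ _
  have hc : τ₀ ^ ((7:ℝ)/2) = a * τ₀ ^ 2 := by
    rw [ha_def, ← Real.rpow_natCast τ₀ 2, ← Real.rpow_add hτ₀]; norm_num
  have ha2 : a ^ 2 = τ₀ ^ 3 := by
    rw [ha_def, ← Real.rpow_natCast (τ₀ ^ ((3:ℝ)/2)) 2, ← Real.rpow_natCast τ₀ 3,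
      ← Real.rpow_mul hτ₀.le]; norm_num
  rw [hc] at h
  simp only [Complex.ext_iff, pow_succ, pow_zero, one_mul, Complex.add_re, Complex.add_im,
    Complex.sub_re, Complex.sub_im, Complex.mul_re, Complex.mul_im, Complex.I_re, Complex.I_im,
    Complex.ofReal_re, Complex.ofReal_im, Complex.zero_re, Complex.zero_im] at h
  obtain ⟨hre, him⟩ := h
  norm_num at hre him
  ring_nf at hre him
  by_cases hΘ : Θ = 0
  · subst hΘ
    refine ⟨rfl, ?_⟩
    have hΩ3 : Ω ^ 3 = 0 := by linear_combination -him
    exact pow_eq_zero_iff (by norm_num) |>.mp hΩ3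
  · exfalso
    have key : (2 * Θ * τ₀ ^ 2 * ν⁻¹) * (Ω - a * Θ) = 0 := by linear_combination hre
    have hfac : (2 * Θ * τ₀ ^ 2 * ν⁻¹) ≠ 0 := by positivity
    have hΩ : Ω = a * Θ := by
      have := (mul_eq_zero.mp key).resolve_left hfac
      linarith
    rw [hΩ] at him
    have him' : Θ * (a * τ₀ ^ 3 * Θ ^ 2 + 4 * τ₀ ^ 4 * ν⁻¹) = 0 := by
      linear_combination him - a * Θ ^ 3 * ha2
    have hpos : 0 < a * τ₀ ^ 3 * Θ ^ 2 + 4 * τ₀ ^ 4 * ν⁻¹ := by positivity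
    rcases mul_eq_zero.mp him' with h' | h'
    · exact hΘ h'
    · linarith
end

section
/- Let τ₀ > 0 and ν > 0 be real numbers, let λ ∈ ℂ with Re λ ≥ 0, and let Ω ∈ ℝ. If (iΩ)³ − 2λ·τ₀^{3/2}·(iΩ)² − 2λ·τ₀²·ν⁻¹·(iΩ) + 2λ²·τ₀^{7/2}·ν⁻¹ + 4λ·τ₀⁴·ν⁻¹ = 0, then λ = 0 and Ω = 0. -/
/-!
Write `λ = x + iy` and `r = |λ|²`. Multiplying the equation by `conj λ` and taking real and
imaginary parts gives `r (2abx + 2aΩ² + 4d) = Ω³ y` and `2b (ay - Ω) r = Ω³ x` (with `a`, `b`,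
`d` as in `charPolyA₀`). For `λ ≠ 0` and, by symmetry, `Ω > 0`, the first
identity forces `y > 0`, the second `ay ≥ Ω`, and then
`Ω³ y > 2aΩ² r ≥ 2aΩ² y² ≥ 2Ω³ y`, which is absurd. For `λ = 0` the equation reads `(iΩ)³ = 0`.
-/

open Complex

/-- The characteristic polynomial of `A₀(λ)`, with `a = τ₀^{3/2}`, `b = τ₀²/ν`, `d = τ₀⁴/ν`. -/
def charPolyA₀ (a b d : ℝ) (lam γ : ℂ) : ℂ :=
  γ ^ 3 - 2 * lam * a * γ ^ 2 - 2 * lam * b * γ + 2 * lam ^ 2 * (a * b) + 4 * lam * d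

section RealForm

variable {a b d x y Ω : ℝ}

lemma false_of_freq_pos (ha : 0 < a) (hb : 0 < b) (hd : 0 < d) (hx : 0 ≤ x) (hΩ : 0 < Ω)
    (hr : 0 < x ^ 2 + y ^ 2)
    (hP : (x ^ 2 + y ^ 2) * (2 * a * b * x + 2 * a * Ω ^ 2 + 4 * d) = Ω ^ 3 * y)
    (hQ : 2 * b * (x ^ 2 + y ^ 2) * (a * y - Ω) = Ω ^ 3 * x) : False := by
  have hΩ3 : 0 < Ω ^ 3 := by positivity
  have hy : 0 < y := by
    refine pos_of_mul_pos_right ?_ hΩ3.le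
    rw [← hP]
    positivity
  have hay : Ω ≤ a * y := by
    have : 0 ≤ 2 * b * (x ^ 2 + y ^ 2) * (a * y - Ω) := by rw [hQ]; positivity
    exact sub_nonneg.mp (nonneg_of_mul_nonneg_right this (by positivity))
  have : 2 * (Ω ^ 3 * y) < Ω ^ 3 * y := calc
    2 * (Ω ^ 3 * y) = 2 * Ω ^ 2 * y * Ω := by ring
    _ ≤ 2 * Ω ^ 2 * y * (a * y) := by gcongr
    _ = 2 * a * Ω ^ 2 * y ^ 2 := by ring
    _ ≤ 2 * a * Ω ^ 2 * (x ^ 2 + y ^ 2) := by gcongr; nlinarith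
    _ < (x ^ 2 + y ^ 2) * (2 * a * b * x + 2 * a * Ω ^ 2 + 4 * d) := by
      nlinarith [mul_pos hr (show 0 < 2 * a * b * x + 4 * d by positivity)]
    _ = Ω ^ 3 * y := hP
  nlinarith [mul_pos hΩ3 hy]

lemma false_of_sq_add_sq_pos (ha : 0 < a) (hb : 0 < b) (hd : 0 < d) (hx : 0 ≤ x)
    (hr : 0 < x ^ 2 + y ^ 2)
    (hP : (x ^ 2 + y ^ 2) * (2 * a * b * x + 2 * a * Ω ^ 2 + 4 * d) = Ω ^ 3 * y)
    (hQ : 2 * b * (x ^ 2 + y ^ 2) * (a * y - Ω) = Ω ^ 3 * x) : False := by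
  rcases lt_trichotomy Ω 0 with hΩ | rfl | hΩ
  · -- `(λ, Ω) ↦ (conj λ, -Ω)` preserves both identities
    exact false_of_freq_pos (y := -y) ha hb hd hx (neg_pos.mpr hΩ) (by linear_combination hr)
      (by linear_combination hP) (by linear_combination -hQ)
  · have hpos : 0 < (x ^ 2 + y ^ 2) * (2 * a * b * x + 2 * a * 0 ^ 2 + 4 * d) := by positivity
    rw [hP] at hpos
    simp at hpos
  · exact false_of_freq_pos ha hb hd hx hΩ hr hP hQ

end RealForm

lemma eq_zero_of_charPolyA₀_eq_zero {a b d : ℝ} (ha : 0 < a) (hb : 0 < b) (hd : 0 < d)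
    {lam : ℂ} (hlam : 0 ≤ lam.re) {Ω : ℝ} (h : charPolyA₀ a b d lam (I * Ω) = 0) :
    lam = 0 ∧ Ω = 0 := by
  by_cases hlam0 : lam = 0
  · simpa [charPolyA₀, hlam0] using h
  exfalso
  have hr : 0 < lam.re ^ 2 + lam.im ^ 2 := by
    simpa [normSq_apply, sq] using normSq_pos.mpr hlam0
  have hre := congrArg re h
  have him := congrArg im h
  simp only [charPolyA₀, pow_succ, pow_zero, one_mul, add_re, sub_re, mul_re, I_re, ofReal_re,
    zero_mul, I_im, ofReal_im, mul_zero, sub_self, mul_im, zero_add, zero_sub, add_zero, re_ofNat,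
    im_ofNat, sub_zero, mul_neg, sub_neg_eq_add, zero_re, add_im, sub_im, neg_mul, zero_im] at hre him
  exact false_of_sq_add_sq_pos (Ω := Ω) ha hb hd hlam hr
    (by linear_combination lam.re * hre + lam.im * him)
    (by linear_combination lam.re * him - lam.im * hre)

/-- Consistent splitting on the closed right half plane: the characteristic polynomial
of `A₀(λ)` has no purely imaginary root `γ = iΩ` for `Re λ ≥ 0` unless `λ = 0`, `Ω = 0`. -/
theorem stmt_4 (τ₀ ν : ℝ) (hτ₀ : 0 < τ₀) (hν : 0 < ν) (lam : ℂ) (hlam : 0 ≤ lam.re)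
    (Ω : ℝ)
    (h : (Complex.I * (Ω : ℂ)) ^ 3
        - 2 * lam * ((τ₀ ^ ((3:ℝ)/2) : ℝ) : ℂ) * (Complex.I * (Ω : ℂ)) ^ 2
        - 2 * lam * ((τ₀ ^ 2 : ℝ) : ℂ) * ((ν⁻¹ : ℝ) : ℂ) * (Complex.I * (Ω : ℂ))
        + 2 * lam ^ 2 * ((τ₀ ^ ((7:ℝ)/2) : ℝ) : ℂ) * ((ν⁻¹ : ℝ) : ℂ)
        + 4 * lam * ((τ₀ ^ 4 : ℝ) : ℂ) * ((ν⁻¹ : ℝ) : ℂ) = 0) :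
    lam = 0 ∧ Ω = 0 := by
  have hpow : τ₀ ^ ((7:ℝ)/2) = τ₀ ^ ((3:ℝ)/2) * τ₀ ^ 2 := by
    rw [← Real.rpow_natCast τ₀ 2, ← Real.rpow_add hτ₀]
    norm_num
  refine eq_zero_of_charPolyA₀_eq_zero (a := τ₀ ^ ((3:ℝ)/2)) (b := τ₀ ^ 2 * ν⁻¹)
    (d := τ₀ ^ 4 * ν⁻¹) (by positivity) (by positivity) (by positivity) hlam ?_
  rw [hpow] at h
  unfold charPolyA₀
  push_cast at h ⊢
  linear_combination h
end

section
/- Let c, q ∈ ℝ satisfy c² + 2q > 0. Then there exist X > 0 and a nonconstant X-periodic twice continuously differentiable function T : ℝ → ℝ such that T″(x) + T(x)²/2 − c·T(x) = q for all x ∈ ℝ. -/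
/-!
Put `T(x) = c + s + s·u(√s·x)` with `s = √(c² + 2q)`: then `T` solves the profile equation iff
`u'' = -(u + u²/2)`, a conservative oscillator with potential `u²/2 + u³/6` and a centre at `0`.
The orbit through `(u, u') = (-1, 0)` has energy `1/3`, less than the potential `2/3` at `u = 1`,
so it stays in the box `u ∈ [-1, 1]`, `|u'| ≤ 1`. It is obtained as a solution of the system
truncated outside this box, which is globally Lipschitz and bounded and keeps an exact conserved
energy. On this orbit `u'` vanishes again at some `x₁ > 0`, since otherwise `u` would move
monotonically forever; as the system is reversible, the solution is symmetric about both `0` and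
`x₁`, hence `2x₁`-periodic.
-/

open Set Function intervalIntegral
open scoped NNReal Topology

noncomputable section

namespace CnoidalWave

section ProdDeriv

variable {E F : Type*} [NormedAddCommGroup E] [NormedSpace ℝ E]
  [NormedAddCommGroup F] [NormedSpace ℝ F] {γ : ℝ → E × F} {γ' : E × F} {t : ℝ}

theorem hasDerivAt_fst (h : HasDerivAt γ γ' t) : HasDerivAt (fun s => (γ s).1) γ'.1 t := by
  simpa using h.hasFDerivAt.fst.hasDerivAt

theorem hasDerivAt_snd (h : HasDerivAt γ γ' t) : HasDerivAt (fun s => (γ s).2) γ'.2 t := by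
  simpa using h.hasFDerivAt.snd.hasDerivAt

end ProdDeriv

section GlobalExistence

variable {E : Type*} [NormedAddCommGroup E] [NormedSpace ℝ E] [CompleteSpace E]

theorem exists_forall_hasDerivAt_of_lipschitzWith_of_norm_le {f : E → E} {K C : ℝ≥0}
    (hf : LipschitzWith K f) (hC : ∀ x, ‖f x‖ ≤ C) (x₀ : E) :
    ∃ γ : ℝ → E, γ 0 = x₀ ∧ ∀ t, HasDerivAt γ (f (γ t)) t := by
  have hlocal (n : ℕ) :
      ∃ γ : ℝ → E, γ 0 = x₀ ∧ ∀ t : ℝ, |t| < n → HasDerivAt γ (f (γ t)) t := by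
    have hPL : IsPicardLindelof (fun _ => f) (tmin := -(n : ℝ)) (tmax := n) ⟨0, by simp⟩ x₀
        (C * n) 0 C K :=
      { lipschitzOnWith := fun _ _ => hf.lipschitzOnWith
        continuousOn := fun _ _ => continuousOn_const
        norm_le := fun _ _ x _ => hC x
        mul_max_le := by simp }
    obtain ⟨γ, hγ0, hγ⟩ := hPL.exists_eq_forall_mem_Icc_hasDerivWithinAt₀
    refine ⟨γ, hγ0, fun t ht => ?_⟩
    obtain ⟨h₁, h₂⟩ := abs_lt.mp ht
    exact (hγ t ⟨h₁.le, h₂.le⟩).hasDerivAt (Icc_mem_nhds h₁ h₂)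
  choose γ hγ0 hγ using hlocal
  have hagree (m n : ℕ) (t : ℝ) (hm : |t| < m) (hn : |t| < n) : γ m t = γ n t := by
    set R := min (m : ℝ) n
    have hsol (k : ℕ) (hk : R ≤ k) (s : ℝ) (hs : s ∈ Ioo (-R) R) :
        HasDerivAt (γ k) (f (γ k s)) s ∧ γ k s ∈ univ :=
      ⟨hγ k s (abs_lt.mpr ⟨by linarith [hs.1], by linarith [hs.2]⟩), trivial⟩
    have ht : t ∈ Ioo (-R) R := abs_lt.mp (lt_min hm hn)
    exact ODE_solution_unique_of_mem_Ioo (fun _ _ => hf.lipschitzOnWith (s := univ))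
      ⟨by linarith [ht.1, ht.2], by linarith [ht.1, ht.2]⟩ (hsol m (min_le_left _ _))
      (hsol n (min_le_right _ _)) ((hγ0 m).trans (hγ0 n).symm) ht
  refine ⟨fun t => γ (⌊|t|⌋₊ + 1) t, by simpa using hγ0 1, fun t => ?_⟩
  have hN (s : ℝ) : |s| < (⌊|s|⌋₊ + 1 : ℕ) := by push_cast; exact Nat.lt_floor_add_one _
  have hnear : (fun s => γ (⌊|s|⌋₊ + 1) s) =ᶠ[𝓝 t] γ (⌊|t|⌋₊ + 1) :=
    ((continuous_abs.tendsto t).eventually_lt_const (hN t)).mono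
      fun s hs => hagree _ _ s (hN s) hs
  exact (hγ _ t (hN t)).congr_of_eventuallyEq hnear

end GlobalExistence

section SeparableHamiltonian

/-- The Hamiltonian vector field `(∂H/∂y, -∂H/∂x)` of `H(x, y) = ∫₀^y p + ∫₀^x g`. -/
def hamiltonianField (p g : ℝ → ℝ) (z : ℝ × ℝ) : ℝ × ℝ := (p z.2, -g z.1)

def energy (p g : ℝ → ℝ) (z : ℝ × ℝ) : ℝ := (∫ y in 0..z.2, p y) + ∫ x in 0..z.1, g x

variable {p g : ℝ → ℝ} {γ : ℝ → ℝ × ℝ}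

theorem lipschitzWith_hamiltonianField {Kp Kg : ℝ≥0} (hp : LipschitzWith Kp p)
    (hg : LipschitzWith Kg g) : LipschitzWith (max Kp Kg) (hamiltonianField p g) := by
  unfold hamiltonianField
  simpa using (hp.comp LipschitzWith.prod_snd).prodMk (hg.neg.comp LipschitzWith.prod_fst)

theorem norm_hamiltonianField_le {C : ℝ} (hp : ∀ y, |p y| ≤ C) (hg : ∀ x, |g x| ≤ C)
    (z : ℝ × ℝ) : ‖hamiltonianField p g z‖ ≤ C :=
  max_le (hp z.2) ((abs_neg _).trans_le (hg z.1))

theorem energy_eq_of_hasDerivAt (hp : Continuous p) (hg : Continuous g)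
    (hγ : ∀ t, HasDerivAt γ (hamiltonianField p g (γ t)) t) (t : ℝ) :
    energy p g (γ t) = energy p g (γ 0) := by
  have hderiv (s : ℝ) : HasDerivAt (fun s => energy p g (γ s)) 0 s := by
    have hy := ((hp.integral_hasStrictDerivAt 0 _).hasDerivAt).comp s (hasDerivAt_snd (hγ s))
    have hx := ((hg.integral_hasStrictDerivAt 0 _).hasDerivAt).comp s (hasDerivAt_fst (hγ s))
    exact (hy.add hx).congr_deriv (by simp only [hamiltonianField]; ring)
  exact is_const_of_deriv_eq_zero (fun s => (hderiv s).differentiableAt)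
    (fun s => (hderiv s).deriv) t 0

theorem fst_reflect_eq_of_snd_eq_zero {K : ℝ≥0} (hf : LipschitzWith K (hamiltonianField p g))
    (hp : ∀ y, p (-y) = -p y) (hγ : ∀ t, HasDerivAt γ (hamiltonianField p g (γ t)) t)
    {t₁ : ℝ} (h : (γ t₁).2 = 0) (t : ℝ) : (γ (2 * t₁ - t)).1 = (γ t).1 := by
  set δ : ℝ → ℝ × ℝ := fun s => ((γ (2 * t₁ - s)).1, -(γ (2 * t₁ - s)).2)
  have hδ (s : ℝ) : HasDerivAt δ (hamiltonianField p g (δ s)) s := by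
    have hγs := (hγ (2 * t₁ - s)).scomp s ((hasDerivAt_id s).const_sub (2 * t₁))
    exact ((hasDerivAt_fst hγs).prodMk (hasDerivAt_snd hγs).neg).congr_deriv
      (by simp [δ, hamiltonianField, hp])
  have hδγ : δ = γ := ODE_solution_unique_univ (v := fun _ => hamiltonianField p g)
    (s := fun _ => univ) (t₀ := t₁) (fun _ => hf.lipschitzOnWith) (fun s => ⟨hδ s, trivial⟩)
    (fun s => ⟨hγ s, trivial⟩) (by ext <;> simp [δ, two_mul, h])
  simpa [δ] using congrArg (fun φ => (φ t).1) hδγ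

end SeparableHamiltonian

section PotentialWell

variable {g : ℝ → ℝ}

theorem strictMonoOn_integral_Ici (hg : Continuous g) (hpos : ∀ t > 0, 0 < g t) :
    StrictMonoOn (fun u => ∫ t in 0..u, g t) (Ici 0) :=
  strictMonoOn_of_deriv_pos (convex_Ici 0)
    (fun u _ => (hg.integral_hasStrictDerivAt 0 u).hasDerivAt.continuousAt.continuousWithinAt)
    (fun u hu => by rw [hg.deriv_integral]; exact hpos u (by simpa using hu))

theorem strictAntiOn_integral_Iic (hg : Continuous g) (hneg : ∀ t < 0, g t < 0) :
    StrictAntiOn (fun u => ∫ t in 0..u, g t) (Iic 0) :=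
  strictAntiOn_of_deriv_neg (convex_Iic 0)
    (fun u _ => (hg.integral_hasStrictDerivAt 0 u).hasDerivAt.continuousAt.continuousWithinAt)
    (fun u hu => by rw [hg.deriv_integral]; exact hneg u (by simpa using hu))

variable (hg : Continuous g) (hpos : ∀ t > 0, 0 < g t) (hneg : ∀ t < 0, g t < 0)
include hg hpos hneg

theorem integral_nonneg_of_sign (u : ℝ) : 0 ≤ ∫ t in 0..u, g t := by
  rcases le_total 0 u with hu | hu
  · simpa using (strictMonoOn_integral_Ici hg hpos).monotoneOn self_mem_Ici hu hu
  · simpa using (strictAntiOn_integral_Iic hg hneg).antitoneOn hu self_mem_Iic hu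

theorem mem_Icc_of_integral_le {a b u : ℝ} (hb : b ≤ 0) (ha : 0 ≤ a)
    (hua : ∫ t in 0..u, g t ≤ ∫ t in 0..a, g t) (hub : ∫ t in 0..u, g t ≤ ∫ t in 0..b, g t) :
    u ∈ Icc b a := by
  constructor
  · by_contra! h
    exact (strictAntiOn_integral_Iic hg hneg (h.le.trans hb) hb h).not_ge hub
  · by_contra! h
    exact (strictMonoOn_integral_Ici hg hpos ha (ha.trans h.le) h).not_ge hua

end PotentialWell

theorem exists_ge_lt_of_le_deriv {f f' : ℝ → ℝ} {k x₀ : ℝ} (hk : 0 < k)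
    (hf : ∀ x, HasDerivAt f (f' x) x) (hf' : ∀ x ≥ x₀, k ≤ f' x) (B : ℝ) :
    ∃ x ≥ x₀, B < f x := by
  set x := x₀ + (|B - f x₀| + 1) / k
  have hx : x₀ ≤ x := le_add_of_nonneg_right (by positivity)
  have hgrowth := (convex_Ici x₀).mul_sub_le_image_sub_of_le_deriv
    (fun y _ => (hf y).continuousAt.continuousWithinAt)
    (fun y _ => (hf y).differentiableAt.differentiableWithinAt)
    (fun y hy => by rw [(hf y).deriv]; exact hf' y (interior_subset hy))
    x₀ self_mem_Ici x hx hx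
  have hkx : k * (x - x₀) = |B - f x₀| + 1 := by simp only [x]; field_simp; ring
  exact ⟨x, hx, by linarith [le_abs_self (B - f x₀)]⟩

theorem contDiff_two_of_hasDerivAt {u v w : ℝ → ℝ} (hu : ∀ x, HasDerivAt u (v x) x)
    (hv : ∀ x, HasDerivAt v (w x) x) (hw : Continuous w) : ContDiff ℝ 2 u := by
  rw [show (2 : WithTop ℕ∞) = 1 + 1 from rfl, contDiff_succ_iff_deriv]
  refine ⟨fun x => (hu x).differentiableAt, by simp, ?_⟩
  rw [show deriv u = v from funext fun x => (hu x).deriv, contDiff_one_iff_deriv,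
    show deriv v = w from funext fun x => (hv x).deriv]
  exact ⟨fun x => (hv x).differentiableAt, hw⟩

theorem deriv_deriv_affine_comp {u v w : ℝ → ℝ} (hu : ∀ x, HasDerivAt u (v x) x)
    (hv : ∀ x, HasDerivAt v (w x) x) (a b k x : ℝ) :
    deriv (deriv fun x => a + b * u (k * x)) x = b * k ^ 2 * w (k * x) := by
  have hd (x : ℝ) : HasDerivAt (fun x => a + b * u (k * x)) (b * k * v (k * x)) x := by
    simpa [mul_comm, mul_left_comm, mul_assoc] using
      (((hu (k * x)).comp x ((hasDerivAt_id x).const_mul k)).const_mul b).const_add a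
  have hdd : HasDerivAt (fun x => b * k * v (k * x)) (b * k ^ 2 * w (k * x)) x := by
    simpa [sq, mul_comm, mul_left_comm, mul_assoc] using
      ((hv (k * x)).comp x ((hasDerivAt_id x).const_mul k)).const_mul (b * k)
  rw [show deriv (fun x => a + b * u (k * x)) = _ from funext fun x => (hd x).deriv]
  exact hdd.deriv

def clampUnit (t : ℝ) : ℝ := max (-1) (min 1 t)

theorem clampUnit_of_mem {t : ℝ} (ht : t ∈ Icc (-1) 1) : clampUnit t = t := by
  simp [clampUnit, ht.1, ht.2]

theorem clampUnit_mem (t : ℝ) : clampUnit t ∈ Icc (-1) 1 :=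
  ⟨le_max_left _ _, max_le (by norm_num) (min_le_left _ _)⟩

theorem clampUnit_neg (t : ℝ) : clampUnit (-t) = -clampUnit t := by
  unfold clampUnit; grind

theorem lipschitzWith_clampUnit : LipschitzWith 1 clampUnit :=
  (LipschitzWith.id.const_min 1).const_max (-1)

theorem continuous_clampUnit : Continuous clampUnit := lipschitzWith_clampUnit.continuous

theorem clampUnit_pos {t : ℝ} (ht : 0 < t) : 0 < clampUnit t :=
  lt_max_of_lt_right (lt_min one_pos ht)

theorem clampUnit_neg_of_neg {t : ℝ} (ht : t < 0) : clampUnit t < 0 :=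
  max_lt (by norm_num) ((min_le_right _ _).trans_lt ht)

def truncatedForce (t : ℝ) : ℝ := clampUnit t + clampUnit t ^ 2 / 2

theorem lipschitzWith_truncatedForce : LipschitzWith 2 truncatedForce := by
  refine LipschitzWith.of_dist_le_mul fun x y => ?_
  obtain ⟨hx₁, hx₂⟩ := clampUnit_mem x
  obtain ⟨hy₁, hy₂⟩ := clampUnit_mem y
  have hxy : |clampUnit x - clampUnit y| ≤ |x - y| := by
    simpa [Real.dist_eq] using lipschitzWith_clampUnit.dist_le_mul x y
  have hfac : truncatedForce x - truncatedForce y =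
      (clampUnit x - clampUnit y) * (1 + (clampUnit x + clampUnit y) / 2) := by
    simp only [truncatedForce]; ring
  have hbound : 0 ≤ 1 + (clampUnit x + clampUnit y) / 2 := by linarith
  calc dist (truncatedForce x) (truncatedForce y)
      = |clampUnit x - clampUnit y| * (1 + (clampUnit x + clampUnit y) / 2) := by
        rw [Real.dist_eq, hfac, abs_mul, abs_of_nonneg hbound]
    _ ≤ |x - y| * 2 := mul_le_mul hxy (by linarith) hbound (abs_nonneg _)
    _ = 2 * dist x y := by rw [Real.dist_eq, mul_comm]

theorem continuous_truncatedForce : Continuous truncatedForce :=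
  lipschitzWith_truncatedForce.continuous

theorem abs_truncatedForce_le (t : ℝ) : |truncatedForce t| ≤ 2 := by
  obtain ⟨h₁, h₂⟩ := clampUnit_mem t
  rw [truncatedForce, abs_le]
  constructor <;> nlinarith

theorem truncatedForce_pos {t : ℝ} (ht : 0 < t) : 0 < truncatedForce t := by
  have := clampUnit_pos ht
  unfold truncatedForce; positivity

theorem truncatedForce_neg {t : ℝ} (ht : t < 0) : truncatedForce t < 0 := by
  have := clampUnit_neg_of_neg ht
  have := (clampUnit_mem t).1
  unfold truncatedForce; nlinarith

theorem integral_clampUnit {u : ℝ} (hu : u ∈ Icc (-1) 1) :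
    ∫ t in 0..u, clampUnit t = u ^ 2 / 2 := by
  have hsub : uIcc 0 u ⊆ Icc (-1) 1 := uIcc_subset_Icc ⟨by norm_num, by norm_num⟩ hu
  rw [integral_congr fun t ht => clampUnit_of_mem (hsub ht)]
  simp

theorem integral_truncatedForce {u : ℝ} (hu : u ∈ Icc (-1) 1) :
    ∫ t in 0..u, truncatedForce t = u ^ 2 / 2 + u ^ 3 / 6 := by
  have hsub : uIcc 0 u ⊆ Icc (-1) 1 := uIcc_subset_Icc ⟨by norm_num, by norm_num⟩ hu
  rw [integral_congr (g := fun t => t + t ^ 2 / 2) fun t ht => by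
    simp only [truncatedForce, clampUnit_of_mem (hsub ht)]]
  simp
  ring

theorem exists_solution_mem_Icc :
    ∃ u v : ℝ → ℝ, u 0 = -1 ∧ v 0 = 0 ∧ (∀ x, HasDerivAt u (v x) x) ∧
      (∀ x, HasDerivAt v (-(u x + u x ^ 2 / 2)) x) ∧ (∀ x, u x ∈ Icc (-1) 1) ∧
      ∀ x₁, v x₁ = 0 → ∀ x, u (2 * x₁ - x) = u x := by
  have hF := lipschitzWith_hamiltonianField lipschitzWith_clampUnit lipschitzWith_truncatedForce
  have hbound : ∀ z, ‖hamiltonianField clampUnit truncatedForce z‖ ≤ (2 : ℝ≥0) :=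
    norm_hamiltonianField_le (fun y => (abs_le.mpr (clampUnit_mem y)).trans (by norm_num))
      abs_truncatedForce_le
  obtain ⟨γ, hγ0, hγ⟩ := exists_forall_hasDerivAt_of_lipschitzWith_of_norm_le hF hbound (-1, 0)
  have henergy (t : ℝ) : energy clampUnit truncatedForce (γ t) = 1 / 3 := by
    rw [energy_eq_of_hasDerivAt continuous_clampUnit continuous_truncatedForce hγ, hγ0, energy,
      integral_truncatedForce (by norm_num)]
    norm_num
  have hmem (t : ℝ) : (γ t).1 ∈ Icc (-1) 1 ∧ (γ t).2 ∈ Icc (-1) 1 := by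
    have hP := integral_nonneg_of_sign continuous_clampUnit (fun _ => clampUnit_pos)
      (fun _ => clampUnit_neg_of_neg) (γ t).2
    have hV := integral_nonneg_of_sign continuous_truncatedForce (fun _ => truncatedForce_pos)
      (fun _ => truncatedForce_neg) (γ t).1
    have hE := henergy t
    rw [energy] at hE
    constructor
    · apply mem_Icc_of_integral_le continuous_truncatedForce (fun _ => truncatedForce_pos)
        (fun _ => truncatedForce_neg) (by norm_num) (by norm_num)
      · rw [integral_truncatedForce (u := 1) (by norm_num)]; linarith
      · rw [integral_truncatedForce (u := -1) (by norm_num)]; linarith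
    · apply mem_Icc_of_integral_le continuous_clampUnit (fun _ => clampUnit_pos)
        (fun _ => clampUnit_neg_of_neg) (by norm_num) (by norm_num)
      · rw [integral_clampUnit (u := 1) (by norm_num)]; linarith
      · rw [integral_clampUnit (u := -1) (by norm_num)]; linarith
  refine ⟨fun t => (γ t).1, fun t => (γ t).2, by simp [hγ0], by simp [hγ0], fun t => ?_,
    fun t => ?_, fun t => (hmem t).1, fun t₁ h t => fst_reflect_eq_of_snd_eq_zero hF clampUnit_neg hγ h t⟩
  · simpa [hamiltonianField, clampUnit_of_mem (hmem t).2] using hasDerivAt_fst (hγ t)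
  · simpa [hamiltonianField, truncatedForce, clampUnit_of_mem (hmem t).1] using
      hasDerivAt_snd (hγ t)

theorem exists_pos_deriv_eq_zero {u v : ℝ → ℝ} (hu : ∀ x, HasDerivAt u (v x) x)
    (hv : ∀ x, HasDerivAt v (-(u x + u x ^ 2 / 2)) x) (hmem : ∀ x, u x ∈ Icc (-1) 1)
    (hu0 : u 0 = -1) : ∃ x > 0, v x = 0 := by
  by_contra! hne
  have hvc : Continuous v := continuous_iff_continuousAt.mpr fun x => (hv x).continuousAt
  have hsign : (∀ x > 0, 0 < v x) ∨ ∀ x > 0, v x < 0 := by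
    by_contra! h
    obtain ⟨⟨x, hx, hvx⟩, y, hy, hvy⟩ := h
    obtain ⟨z, hz, hvz⟩ :=
      isPreconnected_Ioi.intermediate_value hx hy hvc.continuousOn ⟨hvx, hvy⟩
    exact hne z hz hvz
  -- Moving left from the minimum `-1` is impossible. Moving right, `u` must become positive
  -- (else `u'' ≥ 0` and `u` would pass `1`), and then `u'' ≤ -u x₂ < 0` makes `u'` negative.
  rcases hsign with hpos | hneg
  · have humono : MonotoneOn u (Ici 0) := monotoneOn_of_deriv_nonneg (convex_Ici 0)
      (fun x _ => (hu x).continuousAt.continuousWithinAt)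
      (fun x _ => (hu x).differentiableAt.differentiableWithinAt)
      (fun x hx => by rw [(hu x).deriv]; exact (hpos x (by simpa using hx)).le)
    obtain ⟨x₂, hx₂, hux₂⟩ : ∃ x₂ > 0, 0 < u x₂ := by
      by_contra! hle
      have hvmono : MonotoneOn v (Ici 0) := monotoneOn_of_deriv_nonneg (convex_Ici 0)
        (fun x _ => (hv x).continuousAt.continuousWithinAt)
        (fun x _ => (hv x).differentiableAt.differentiableWithinAt)
        (fun x hx => by
          rw [(hv x).deriv]
          have := hle x (by simpa using hx)
          nlinarith [(hmem x).1])
      obtain ⟨x, -, hx⟩ := exists_ge_lt_of_le_deriv (hpos 1 one_pos) hu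
        (fun x hx => hvmono (by norm_num) (show (0 : ℝ) ≤ x by linarith) hx) 1
      exact hx.not_ge (hmem x).2
    have hv' (x : ℝ) : HasDerivAt (fun x => -v x) (u x + u x ^ 2 / 2) x :=
      (hv x).neg.congr_deriv (neg_neg _)
    obtain ⟨x, hx, hvx⟩ := exists_ge_lt_of_le_deriv hux₂ hv'
      (fun x hx => by
        have := humono hx₂.le (hx₂.le.trans hx) hx
        nlinarith) 0
    exact (hpos x (hx₂.trans_le hx)).not_gt (by linarith)
  · have huanti : StrictAntiOn u (Ici 0) := strictAntiOn_of_deriv_neg (convex_Ici 0)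
      (fun x _ => (hu x).continuousAt.continuousWithinAt)
      (fun x hx => by rw [(hu x).deriv]; exact hneg x (by simpa using hx))
    have := huanti self_mem_Ici (show (1 : ℝ) ∈ Ici 0 by norm_num) one_pos
    linarith [(hmem 1).1]

theorem exists_periodic_solution :
    ∃ P > 0, ∃ u v : ℝ → ℝ, Periodic u P ∧ (∃ x, u x ≠ u 0) ∧ (∀ x, HasDerivAt u (v x) x) ∧
      ∀ x, HasDerivAt v (-(u x + u x ^ 2 / 2)) x := by
  obtain ⟨u, v, hu0, hv0, hu, hv, hmem, hsymm⟩ := exists_solution_mem_Icc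
  obtain ⟨x₁, hx₁, hvx₁⟩ := exists_pos_deriv_eq_zero hu hv hmem hu0
  refine ⟨2 * x₁, by positivity, u, v, fun x => ?_, ?_, hu, hv⟩
  · calc u (x + 2 * x₁) = u (2 * x₁ - -x) := by ring_nf
      _ = u (2 * 0 - x) := by rw [hsymm x₁ hvx₁]; ring_nf
      _ = u x := hsymm 0 hv0 x
  · by_contra! hconst
    have hv_zero (x : ℝ) : v x = 0 :=
      (hu x).unique (by rw [show u = fun _ => u 0 from funext hconst]; exact hasDerivAt_const x _)
    have hv0' := (hv 0).unique
      (by rw [show v = fun _ => 0 from funext hv_zero]; exact hasDerivAt_const 0 _)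
    norm_num [hu0] at hv0'

end CnoidalWave

end

open CnoidalWave in
/-- Existence of nonconstant periodic (cnoidal) solutions of the KdV profile ODE
`T'' + T²/2 - cT = q` when `c² + 2q > 0`. -/
theorem stmt_7 (c q : ℝ) (h : 0 < c ^ 2 + 2 * q) :
    ∃ X > (0:ℝ), ∃ T : ℝ → ℝ, ContDiff ℝ 2 T ∧ Function.Periodic T X ∧
      (∃ x y, T x ≠ T y) ∧
      ∀ x, deriv (deriv T) x + T x ^ 2 / 2 - c * T x = q := by
  obtain ⟨P, hP, u, v, hper, ⟨x₀, hx₀⟩, hu, hv⟩ := exists_periodic_solution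
  set s := Real.sqrt (c ^ 2 + 2 * q)
  have hs : 0 < s := Real.sqrt_pos.mpr h
  have hs2 : s ^ 2 = c ^ 2 + 2 * q := Real.sq_sqrt h.le
  set k := Real.sqrt s
  have hk : 0 < k := Real.sqrt_pos.mpr hs
  have hk2 : k ^ 2 = s := Real.sq_sqrt hs.le
  have huc : Continuous u := continuous_iff_continuousAt.mpr fun x => (hu x).continuousAt
  have hw : Continuous fun x => -(u x + u x ^ 2 / 2) := by fun_prop
  refine ⟨k⁻¹ * P, by positivity, fun x => c + s + s * u (k * x), ?_, ?_, ⟨0, x₀ / k, ?_⟩, ?_⟩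
  · exact contDiff_const.add (contDiff_const.mul
      ((contDiff_two_of_hasDerivAt hu hv hw).comp (contDiff_const.mul contDiff_id)))
  · exact (hper.const_mul k).comp fun y => c + s + s * y
  · simpa [hs.ne', hk.ne', mul_div_cancel₀] using hx₀.symm
  · intro x
    rw [deriv_deriv_affine_comp hu hv, hk2]
    linear_combination (1 / 2 : ℝ) * hs2
end

section
/- Let c₀ ∈ ℝ, k₀ ∈ ℝ with k₀ ≠ 0, and let a : ℝ → ℝ be a nonconstant, continuously differentiable, 1-periodic function with a(x) > 0 for all x. Then ∫₀¹ (d/dx)[a(x)⁻¹] · ( k₀·c₀²·a′(x) + (k₀/2)·(d/dx)[a(x)⁻²] ) dx = 0 if and only if c₀² = ( ∫₀¹ a(x)⁻⁵·a′(x)² dx ) / ( ∫₀¹ a(x)⁻²·a′(x)² dx ); moreover the denominator ∫₀¹ a(x)⁻²·a′(x)² dx is strictly positive. -/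
/-!
By the chain rule `(1/a)' = -a'/a²` and `(a⁻²)' = -2a'/a³`, so the integrand of the selection
condition is pointwise `k₀ a'²/a⁵ - k₀ c₀² a'²/a²`, and the condition reads `k₀ (A - c₀² B) = 0`
with `A = ∫ a'²/a⁵` and `B = ∫ a'²/a²`. Since `a` is nonconstant, `a'` does not vanish
identically; `a'²/a²` is then a continuous, nonnegative, `1`-periodic function which is positive
somewhere, so its integral over a period is positive and one may divide by `B`.
-/

open MeasureTheory Function Set

theorem Function.Periodic.deriv {𝕜 F : Type*} [NontriviallyNormedField 𝕜] [NormedAddCommGroup F]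
    [NormedSpace 𝕜 F] {f : 𝕜 → F} {T : 𝕜} (hf : Periodic f T) : Periodic (deriv f) T := fun x => by
  rw [← deriv_comp_add_const, funext hf]

theorem Continuous.intervalIntegral_pos_of_nonneg_nonzero {f : ℝ → ℝ} {a b c : ℝ}
    (hf : Continuous f) (hnn : 0 ≤ f) (hc : c ∈ Ioo a b) (hfc : f c ≠ 0) :
    0 < ∫ x in a..b, f x := by
  refine (intervalIntegral.integral_pos_iff_support_of_nonneg_ae
    (Filter.Eventually.of_forall hnn) (hf.intervalIntegrable a b)).2 ⟨hc.1.trans hc.2, ?_⟩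
  have hopen : IsOpen (support f ∩ Ioo a b) := hf.isOpen_support.inter isOpen_Ioo
  exact (hopen.measure_pos volume ⟨c, hfc, hc⟩).trans_le
    (measure_mono (inter_subset_inter_right _ Ioo_subset_Ioc_self))

theorem Function.Periodic.intervalIntegral_pos_of_nonneg_nonzero {f : ℝ → ℝ} {T z : ℝ}
    (hper : Periodic f T) (hT : 0 < T) (hf : Continuous f) (hnn : 0 ≤ f) (hz : f z ≠ 0)
    (t : ℝ) : 0 < ∫ x in t..t + T, f x := by
  rw [hper.intervalIntegral_add_eq t (z - T / 2)]
  exact hf.intervalIntegral_pos_of_nonneg_nonzero hnn ⟨by linarith, by linarith⟩ hz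

theorem exists_deriv_ne_zero_of_ne {𝕜 G : Type*} [RCLike 𝕜] [NormedAddCommGroup G]
    [NormedSpace 𝕜 G] {f : 𝕜 → G} (hd : Differentiable 𝕜 f) (hnc : ∃ x y, f x ≠ f y) :
    ∃ z, deriv f z ≠ 0 := by
  by_contra! h
  obtain ⟨x, y, hxy⟩ := hnc
  exact hxy (is_const_of_deriv_eq_zero hd h x y)

section Profile

variable {a : ℝ → ℝ}

theorem ContDiff.continuous_inv_pow_mul_deriv_sq (ha : ContDiff ℝ 1 a) (h0 : ∀ x, a x ≠ 0)
    (n : ℕ) : Continuous fun x => (a x ^ n)⁻¹ * deriv a x ^ 2 :=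
  ((ha.continuous.pow n).inv₀ fun x => pow_ne_zero n (h0 x)).mul
    ((ha.continuous_deriv le_rfl).pow 2)

theorem integral_inv_sq_mul_deriv_sq_pos_of_periodic (ha : ContDiff ℝ 1 a)
    (hper : Periodic a 1) (h0 : ∀ x, a x ≠ 0) (hnc : ∃ x y, a x ≠ a y) :
    0 < ∫ x in (0 : ℝ)..1, (a x ^ 2)⁻¹ * deriv a x ^ 2 := by
  obtain ⟨z, hz⟩ := exists_deriv_ne_zero_of_ne (ha.differentiable one_ne_zero) hnc
  have hperg : Periodic (fun x => (a x ^ 2)⁻¹ * deriv a x ^ 2) 1 := fun x => by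
    simp only [hper x, hper.deriv x]
  simpa using hperg.intervalIntegral_pos_of_nonneg_nonzero one_pos
    (ha.continuous_inv_pow_mul_deriv_sq h0 2) (fun x => by positivity)
    (mul_ne_zero (inv_ne_zero (pow_ne_zero 2 (h0 z))) (pow_ne_zero 2 hz)) 0

theorem deriv_inv_sq_comp {x : ℝ} (hd : DifferentiableAt ℝ a x) (hx : a x ≠ 0) :
    deriv (fun y => (a y ^ 2)⁻¹) x = -2 * deriv a x / a x ^ 3 := by
  rw [((hd.hasDerivAt.fun_pow 2).fun_inv (pow_ne_zero 2 hx)).deriv]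
  field_simp
  ring

theorem selection_integrand_eq {x : ℝ} (hd : DifferentiableAt ℝ a x) (hx : a x ≠ 0)
    (k c : ℝ) :
    deriv (fun y => (a y)⁻¹) x *
        (k * c ^ 2 * deriv a x + (k / 2) * deriv (fun y => (a y ^ 2)⁻¹) x)
      = k * ((a x ^ 5)⁻¹ * deriv a x ^ 2) - k * c ^ 2 * ((a x ^ 2)⁻¹ * deriv a x ^ 2) := by
  rw [deriv_fun_inv'' hd hx, deriv_inv_sq_comp hd hx]
  field_simp
  ring

theorem integral_selection_integrand (ha : ContDiff ℝ 1 a) (h0 : ∀ x, a x ≠ 0) (k c s t : ℝ) :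
    ∫ x in s..t, deriv (fun y => (a y)⁻¹) x *
        (k * c ^ 2 * deriv a x + (k / 2) * deriv (fun y => (a y ^ 2)⁻¹) x)
      = k * ((∫ x in s..t, (a x ^ 5)⁻¹ * deriv a x ^ 2)
        - c ^ 2 * ∫ x in s..t, (a x ^ 2)⁻¹ * deriv a x ^ 2) := by
  have hd : Differentiable ℝ a := ha.differentiable one_ne_zero
  simp only [selection_integrand_eq (hd _) (h0 _)]
  rw [intervalIntegral.integral_sub, intervalIntegral.integral_const_mul,
    intervalIntegral.integral_const_mul, mul_sub, mul_assoc]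
  all_goals exact ((ha.continuous_inv_pow_mul_deriv_sq h0 _).intervalIntegrable s t).const_mul _

end Profile

/-- The selection (orthogonality) condition for persistence of a `1`-periodic
limiting profile holds iff `c₀²` equals the ratio of the two integrals; the
denominator is strictly positive. -/
theorem stmt_16 (c₀ k₀ : ℝ) (hk₀ : k₀ ≠ 0)
    (a : ℝ → ℝ) (ha : ContDiff ℝ 1 a) (hper : Function.Periodic a 1)
    (hpos : ∀ x, 0 < a x) (hnc : ∃ x y, a x ≠ a y) :
    ((∫ x in (0:ℝ)..1, deriv (fun y => (a y)⁻¹) x *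
        (k₀ * c₀ ^ 2 * deriv a x + (k₀ / 2) * deriv (fun y => (a y ^ 2)⁻¹) x)) = 0
      ↔ c₀ ^ 2 = (∫ x in (0:ℝ)..1, (a x ^ 5)⁻¹ * (deriv a x) ^ 2)
                  / (∫ x in (0:ℝ)..1, (a x ^ 2)⁻¹ * (deriv a x) ^ 2))
    ∧ 0 < ∫ x in (0:ℝ)..1, (a x ^ 2)⁻¹ * (deriv a x) ^ 2 := by
  have h0 : ∀ x, a x ≠ 0 := fun x => (hpos x).ne'
  have hB := integral_inv_sq_mul_deriv_sq_pos_of_periodic ha hper h0 hnc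
  refine ⟨?_, hB⟩
  rw [integral_selection_integrand ha h0, mul_eq_zero,
    or_iff_right hk₀, sub_eq_zero, eq_div_iff hB.ne', eq_comm]
end
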